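/- arXiv:1409.7861 — 4 statements merged into one kernel-verified Lean document; each statement's English description precedes it below -/
import Mathlib

section
/- Let m ≥ 1, let A be a subset of {0,1}^m ⊆ ℝ^m, let J : ℝ^m → ℝ, let ᾱ ∈ {0,1}^m with J(ᾱ) = 0, and let d ∈ ℝ^m satisfy ⟨d, α − ᾱ⟩ ≥ J(α) − J(ᾱ) for every α ∈ {0,1}^m. Suppose α_OPT ∈ A maximizes J over A, α* ∈ A maximizes α ↦ ⟨d, α⟩ over A, ⟨d, α* − ᾱ⟩ ≠ 0, and the ratio ρ := J(α*) / ⟨d, α* − ᾱ⟩ is nonnegative. Then the suboptimality bound ρ · J(α_OPT) ≤ J(α*) holds. -/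
open scoped RealInnerProductSpace

/-- Suboptimality bound `ρ · J(α_OPT) ≤ J(α*)` where
`ρ = J(α*) / ⟪d, α* − ᾱ⟫` is assumed nonnegative, `J(ᾱ) = 0`, and `d` satisfies the
first-order concavity bound over the binary cube. -/
theorem stmt_1 (m : ℕ) (hm : 1 ≤ m)
    (A : Set (EuclideanSpace ℝ (Fin m)))
    (hA : A ⊆ {α : EuclideanSpace ℝ (Fin m) | ∀ i, α i = 0 ∨ α i = 1})
    (J : EuclideanSpace ℝ (Fin m) → ℝ)
    (ᾱ : EuclideanSpace ℝ (Fin m)) (hᾱ : ∀ i, ᾱ i = 0 ∨ ᾱ i = 1)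
    (hJᾱ : J ᾱ = 0)
    (d : EuclideanSpace ℝ (Fin m))
    (hd : ∀ α : EuclideanSpace ℝ (Fin m), (∀ i, α i = 0 ∨ α i = 1) →
      J α - J ᾱ ≤ ⟪d, α - ᾱ⟫)
    (αopt : EuclideanSpace ℝ (Fin m)) (hopt : αopt ∈ A)
    (hoptmax : ∀ α ∈ A, J α ≤ J αopt)
    (αstar : EuclideanSpace ℝ (Fin m)) (hstar : αstar ∈ A)
    (hstarmax : ∀ α ∈ A, ⟪d, α⟫ ≤ ⟪d, αstar⟫)
    (hne : ⟪d, αstar - ᾱ⟫ ≠ 0)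
    (ρ : ℝ) (hρ : ρ = J αstar / ⟪d, αstar - ᾱ⟫) (hρ0 : 0 ≤ ρ) :
    ρ * J αopt ≤ J αstar := by
  have h1 : J αopt ≤ ⟪d, αopt - ᾱ⟫ := by
    have := hd αopt (hA hopt)
    simpa [hJᾱ] using this
  have h2 : ⟪d, αopt - ᾱ⟫ ≤ ⟪d, αstar - ᾱ⟫ := by
    rw [inner_sub_right, inner_sub_right]
    have := hstarmax αopt hopt
    linarith
  have h3 : ρ * ⟪d, αstar - ᾱ⟫ = J αstar := by
    rw [hρ, div_mul_eq_mul_div, mul_div_assoc, div_self hne, mul_one]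
  calc ρ * J αopt ≤ ρ * ⟪d, αstar - ᾱ⟫ := by nlinarith
    _ = J αstar := h3
end

section
/- Let m ≥ 1, let A be a subset of {0,1}^m ⊆ ℝ^m, let J : ℝ^m → ℝ, let ᾱ ∈ A with J(ᾱ) = 0, and let d ∈ ℝ^m satisfy ⟨d, α − ᾱ⟩ ≥ J(α) − J(ᾱ) for every α ∈ {0,1}^m. Suppose α_OPT ∈ A maximizes J over A, α* ∈ A maximizes α ↦ ⟨d, α⟩ over A, and ⟨d, α* − ᾱ⟩ ≠ 0. Define ρ := J(α*) / ⟨d, α* − ᾱ⟩ and ρ* := max(ρ, 0). Then the post-processed suboptimality bound ρ* · J(α_OPT) ≤ max(J(α*), J(ᾱ)) = max(J(α*), 0) holds. -/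
open scoped RealInnerProductSpace

/-- Post-processed suboptimality bound: with `ρ := J(α*) / ⟪d, α* − ᾱ⟫`
and `ρ* := max ρ 0`, one has `ρ* · J(α_OPT) ≤ max (J α*) (J ᾱ) = max (J α*) 0`. -/
theorem stmt_3 (m : ℕ) (hm : 1 ≤ m)
    (A : Set (EuclideanSpace ℝ (Fin m)))
    (hA : A ⊆ {α : EuclideanSpace ℝ (Fin m) | ∀ i, α i = 0 ∨ α i = 1})
    (J : EuclideanSpace ℝ (Fin m) → ℝ)
    (ᾱ : EuclideanSpace ℝ (Fin m)) (hᾱA : ᾱ ∈ A)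
    (hJᾱ : J ᾱ = 0)
    (d : EuclideanSpace ℝ (Fin m))
    (hd : ∀ α : EuclideanSpace ℝ (Fin m), (∀ i, α i = 0 ∨ α i = 1) →
      J α - J ᾱ ≤ ⟪d, α - ᾱ⟫)
    (αopt : EuclideanSpace ℝ (Fin m)) (hopt : αopt ∈ A)
    (hoptmax : ∀ α ∈ A, J α ≤ J αopt)
    (αstar : EuclideanSpace ℝ (Fin m)) (hstar : αstar ∈ A)
    (hstarmax : ∀ α ∈ A, ⟪d, α⟫ ≤ ⟪d, αstar⟫)
    (hne : ⟪d, αstar - ᾱ⟫ ≠ 0)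
    (ρ ρstar : ℝ) (hρ : ρ = J αstar / ⟪d, αstar - ᾱ⟫) (hρstar : ρstar = max ρ 0) :
    ρstar * J αopt ≤ max (J αstar) (J ᾱ) ∧ max (J αstar) (J ᾱ) = max (J αstar) 0 := by
  subst hρ hρstar
  set D : ℝ := ⟪d, αstar - ᾱ⟫ with hDdef
  have hD0 : 0 ≤ D := by
    have h1 : ⟪d, ᾱ⟫ ≤ ⟪d, αstar⟫ := hstarmax ᾱ hᾱA
    rw [hDdef, inner_sub_right]; linarith
  have hD : 0 < D := lt_of_le_of_ne hD0 (Ne.symm hne)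
  have hJopt : J αopt ≤ D := by
    have h2 := hd αopt (hA hopt)
    have h3 : ⟪d, αopt⟫ ≤ ⟪d, αstar⟫ := hstarmax αopt hopt
    rw [inner_sub_right] at h2
    rw [hDdef, inner_sub_right]
    linarith
  have hkey : max (J αstar / D) 0 * J αopt ≤ max (J αstar) 0 := by
    calc max (J αstar / D) 0 * J αopt
        ≤ max (J αstar / D) 0 * D :=
          mul_le_mul_of_nonneg_left hJopt (le_max_right _ _)
      _ = max (J αstar / D * D) (0 * D) := (max_mul_of_nonneg _ _ hD0)
      _ = max (J αstar) 0 := by rw [div_mul_cancel₀ _ hne, zero_mul]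
  constructor
  · rw [hJᾱ]; exact hkey
  · rw [hJᾱ]
end

section
/- Fix n ≥ 1, T > 0, and x₀ ∈ ℝⁿ. Let g, h : ℝⁿ → ℝⁿ be twice continuously differentiable with globally Lipschitz continuous values (g is globally Lipschitz and h is globally Lipschitz), let r_g, r_h : ℝⁿ → ℝ and q : ℝⁿ → ℝ be continuously differentiable. Let x̄ : ℝ → ℝⁿ solve x̄(0) = x₀ and x̄'(t) = g(x̄(t)) for all t ∈ [0,T]; let λ : ℝ → ℝⁿ solve the adjoint system λ(T) = ∇q(x̄(T)) and λ'(t) = −(Dg(x̄(t)))ᵀ λ(t) − ∇r_g(x̄(t)) for all t ∈ [0,T], where Dg(x̄(t))ᵀ is the adjoint (transpose) of the Fréchet derivative of g at x̄(t); and for each ε ∈ (0,1] let x_ε : ℝ → ℝⁿ solve the ε-variational system x_ε(0) = x₀ and x_ε'(t) = (1−ε) g(x_ε(t)) + ε h(x_ε(t)) for all t ∈ [0,T]. Define J_ε := ∫₀ᵀ [ (1−ε) r_g(x_ε(t)) + ε r_h(x_ε(t)) ] dt + q(x_ε(T)) and J₀ := ∫₀ᵀ r_g(x̄(t)) dt +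 q(x̄(T)). Then the one-sided limit lim_{ε → 0⁺} (J_ε − J₀)/ε exists and equals ∫₀ᵀ [ ⟨ h(x̄(t)) − g(x̄(t)), λ(t) ⟩ + r_h(x̄(t)) − r_g(x̄(t)) ] dt. -/
/-!
Grönwall's inequality gives `‖x_ε t - x̄ t‖ = O(ε)` uniformly on `[0, T]`. Differentiating
`⟪x_ε - x̄, λ⟫` and using the adjoint equation turns `J_ε - J₀ - ε ∫ (⟪h - g, λ⟫ + r_h - r_g)` into
the integral of the first-order remainders of `(1 - ε) g + ε h` and `(1 - ε) r_g + ε r_h` around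
`(0, x̄ t)`, plus the first-order remainder of `q` at `x̄ T`. Each is `o(ε)` uniformly in `t`, since
the derivatives are uniformly continuous near the compact trajectory.
-/

open Set Filter Topology Asymptotics MeasureTheory
open scoped NNReal RealInnerProductSpace

theorem IsCompact.exists_forall_dist_lt_of_continuousAt {α β : Type*} [PseudoMetricSpace α]
    [PseudoMetricSpace β] {f : α → β} {K : Set α} (hK : IsCompact K)
    (hf : ∀ x ∈ K, ContinuousAt f x) {η : ℝ} (hη : 0 < η) :
    ∃ δ > 0, ∀ x ∈ K, ∀ y, dist x y < δ → dist (f x) (f y) < η := by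
  obtain ⟨δ, hδ, hsub⟩ := Metric.mem_uniformity_dist.1
    (hK.uniformContinuousAt_of_continuousAt f hf (Metric.dist_mem_uniformity hη))
  exact ⟨δ, hδ, fun x hx y hxy => hsub hxy hx⟩

section

variable {E F : Type*} [NormedAddCommGroup E] [NormedSpace ℝ E] [NormedAddCommGroup F]
  [NormedSpace ℝ F]

theorem IsCompact.exists_forall_norm_sub_sub_fderiv_le {f : E → F} (hf : ContDiff ℝ 1 f)
    {K : Set E} (hK : IsCompact K) {η : ℝ} (hη : 0 < η) :
    ∃ δ > 0, ∀ x ∈ K, ∀ y, ‖y - x‖ < δ → ‖f y - f x - fderiv ℝ f x (y - x)‖ ≤ η * ‖y - x‖ := by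
  obtain ⟨δ, hδ, hclose⟩ := hK.exists_forall_dist_lt_of_continuousAt
    (fun x _ => (hf.continuous_fderiv one_ne_zero).continuousAt) hη
  refine ⟨δ, hδ, fun x hx y hy => ?_⟩
  refine (convex_ball x δ).norm_image_sub_le_of_norm_fderiv_le'
    (fun z _ => (hf.differentiable one_ne_zero).differentiableAt) (fun z hz => ?_)
    (Metric.mem_ball_self hδ) (by rwa [Metric.mem_ball, dist_eq_norm])
  rw [← dist_eq_norm, dist_comm]
  exact (hclose x hx z (by rwa [dist_comm])).le

theorem HasFDerivAt.isLittleO_comp_of_isBigO {α : Type*} {f : E → F} {f' : E →L[ℝ] F} {x₀ : E}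
    (hf : HasFDerivAt f f' x₀) {Y : α → E} {l : Filter α} {φ : α → ℝ}
    (hY : (fun a => Y a - x₀) =O[l] φ) (hφ : Tendsto φ l (𝓝 0)) :
    (fun a => f (Y a) - f x₀ - f' (Y a - x₀)) =o[l] φ :=
  (hf.isLittleO.comp_tendsto (tendsto_sub_nhds_zero_iff.1 (hY.trans_tendsto hφ))).trans_isBigO hY

/-- The first-order remainder of `(ε, y) ↦ (1 - ε) • a y + ε • b y` around `(0, x)`. -/
noncomputable def convexRemainder (a b : E → F) (ε : ℝ) (x y : E) : F :=
  (1 - ε) • a y + ε • b y - a x - fderiv ℝ a x (y - x) - ε • (b x - a x)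

theorem convexRemainder_eq (a b : E → F) (ε : ℝ) (x y : E) :
    convexRemainder a b ε x y =
      (a y - a x - fderiv ℝ a x (y - x)) + ε • ((b y - a y) - (b x - a x)) := by
  unfold convexRemainder
  module

theorem ContinuousOn.convexRemainder {a b : E → F} (ha : ContDiff ℝ 1 a) (hb : Continuous b)
    {x y : ℝ → E} {s : Set ℝ} (hx : ContinuousOn x s) (hy : ContinuousOn y s) (ε : ℝ) :
    ContinuousOn (fun t => convexRemainder a b ε (x t) (y t)) s := by
  have hDa := (ha.continuous_fderiv one_ne_zero).comp_continuousOn hx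
  have hac := ha.continuous
  unfold _root_.convexRemainder
  fun_prop

theorem IsCompact.exists_forall_norm_convexRemainder_le {a b : E → F} (ha : ContDiff ℝ 1 a)
    (hb : Continuous b) {K : Set E} (hK : IsCompact K) {η : ℝ} (hη : 0 < η) :
    ∃ δ > 0, ∀ x ∈ K, ∀ y, ‖y - x‖ < δ → ∀ ε : ℝ,
      ‖convexRemainder a b ε x y‖ ≤ η * (‖y - x‖ + |ε|) := by
  obtain ⟨δ₁, hδ₁, htaylor⟩ := hK.exists_forall_norm_sub_sub_fderiv_le ha hη
  obtain ⟨δ₂, hδ₂, hclose⟩ := hK.exists_forall_dist_lt_of_continuousAt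
    (fun x _ => (hb.sub ha.continuous).continuousAt) hη
  refine ⟨min δ₁ δ₂, lt_min hδ₁ hδ₂, fun x hx y hy ε => ?_⟩
  have hdiff : ‖(b y - a y) - (b x - a x)‖ ≤ η := by
    rw [← dist_eq_norm, dist_comm]
    exact (hclose x hx y (by rw [dist_comm, dist_eq_norm]; exact hy.trans_le (min_le_right _ _))).le
  calc ‖convexRemainder a b ε x y‖
      ≤ ‖a y - a x - fderiv ℝ a x (y - x)‖ + |ε| * ‖(b y - a y) - (b x - a x)‖ := by
        rw [convexRemainder_eq, ← Real.norm_eq_abs, ← norm_smul]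
        exact norm_add_le _ _
    _ ≤ η * ‖y - x‖ + |ε| * η := by
        gcongr
        exact htaylor x hx y (hy.trans_le (min_le_left _ _))
    _ = η * (‖y - x‖ + |ε|) := by ring

theorem isLittleO_convexRemainder_comp {ι : Type*} {a b : E → F} (ha : ContDiff ℝ 1 a)
    (hb : Continuous b) {K : Set E} (hK : IsCompact K) {s : Set ι} {x : ι → E}
    (hxK : MapsTo x s K) {X : ℝ → ι → E} {l : Filter ℝ} (hl : l ≤ 𝓝 0)
    (hX : (fun p : ℝ × ι => X p.1 p.2 - x p.2) =O[l ×ˢ 𝓟 s] Prod.fst) :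
    (fun p : ℝ × ι => convexRemainder a b p.1 (x p.2) (X p.1 p.2)) =o[l ×ˢ 𝓟 s] Prod.fst := by
  obtain ⟨C, hC, hXC⟩ := hX.exists_pos
  rw [isLittleO_iff]
  intro c hc
  obtain ⟨δ, hδ, hrem⟩ :=
    hK.exists_forall_norm_convexRemainder_le ha hb (η := c / (C + 1)) (by positivity)
  have hsmall : ∀ᶠ p : ℝ × ι in l ×ˢ 𝓟 s, p.1 ∈ Metric.ball 0 (δ / C) :=
    (tendsto_fst.mono_right hl).eventually (Metric.ball_mem_nhds 0 (div_pos hδ hC))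
  have hmem : ∀ᶠ p : ℝ × ι in l ×ˢ 𝓟 s, p.2 ∈ s :=
    eventually_prod_principal_iff.2 (Eventually.of_forall fun _ _ ht => ht)
  filter_upwards [hXC.bound, hsmall, hmem] with p hp hpε hps
  rw [Metric.mem_ball, dist_zero_right] at hpε
  have hnear : ‖X p.1 p.2 - x p.2‖ < δ :=
    calc ‖X p.1 p.2 - x p.2‖ ≤ C * ‖p.1‖ := hp
      _ < C * (δ / C) := by gcongr
      _ = δ := by field_simp
  calc ‖convexRemainder a b p.1 (x p.2) (X p.1 p.2)‖
      ≤ c / (C + 1) * (‖X p.1 p.2 - x p.2‖ + |p.1|) := hrem _ (hxK hps) _ hnear _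
    _ ≤ c / (C + 1) * (C * ‖p.1‖ + ‖p.1‖) := by rw [← Real.norm_eq_abs]; gcongr
    _ = c * ‖p.1‖ := by field_simp

end

theorem isLittleO_intervalIntegral_of_isLittleO_prod {α G F' : Type*} [NormedAddCommGroup G]
    [NormedSpace ℝ G] [SeminormedAddCommGroup F'] {l : Filter α} {Φ : α → ℝ → G} {f : α → F'}
    {a b : ℝ} (hab : a ≤ b)
    (hΦ : (fun p : α × ℝ => Φ p.1 p.2) =o[l ×ˢ 𝓟 (Icc a b)] (fun p => f p.1)) :
    (fun ε => ∫ t in a..b, Φ ε t) =o[l] f := by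
  rw [isLittleO_iff] at hΦ ⊢
  intro c hc
  have hlen : 0 < b - a + 1 := by linarith
  filter_upwards [eventually_prod_principal_iff.1 (hΦ (div_pos hc hlen))] with ε hε
  calc ‖∫ t in a..b, Φ ε t‖ ≤ c / (b - a + 1) * ‖f ε‖ * |b - a| :=
        intervalIntegral.norm_integral_le_of_norm_le_const fun t ht =>
          hε t (Ioc_subset_Icc_self (by rwa [uIoc_of_le hab] at ht))
    _ = c * ‖f ε‖ * ((b - a) / (b - a + 1)) := by
        rw [abs_of_nonneg (sub_nonneg.2 hab)]
        ring
    _ ≤ c * ‖f ε‖ := mul_le_of_le_one_right (by positivity) ((div_le_one hlen).2 (by linarith))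

theorem Asymptotics.IsLittleO.inner_isBigO_one {α E : Type*} [NormedAddCommGroup E]
    [InnerProductSpace ℝ E] {l : Filter α} {u v : α → E} {f : α → ℝ} (hu : u =o[l] f)
    (hv : v =O[l] (fun _ => (1 : ℝ))) : (fun p => ⟪u p, v p⟫) =o[l] f := by
  have hprod : (fun p => ‖u p‖ * ‖v p‖) =o[l] f := by
    simpa using hu.norm_left.mul_isBigO hv.norm_left
  refine IsBigO.trans_isLittleO (isBigO_of_le l fun p => ?_) hprod
  rw [norm_mul, _root_.norm_norm, _root_.norm_norm]
  exact norm_inner_le_norm _ _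

theorem tendsto_div_of_isLittleO_sub_mul {f : ℝ → ℝ} {c : ℝ} {l : Filter ℝ}
    (hl : ∀ᶠ ε in l, ε ≠ 0) (h : (fun ε => f ε - ε * c) =o[l] id) :
    Tendsto (fun ε => f ε / ε) l (𝓝 c) := by
  have := (h.tendsto_div_nhds_zero).add_const c
  rw [zero_add] at this
  refine this.congr' (hl.mono fun ε hε => ?_)
  simp only [id]
  field_simp
  ring

theorem gronwallBound_zero_mul (K ε M x : ℝ) :
    gronwallBound 0 K (ε * M) x = ε * gronwallBound 0 K M x := by
  unfold gronwallBound
  split_ifs <;> ring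

section

variable {E : Type*} [NormedAddCommGroup E] [NormedSpace ℝ E]

theorem LipschitzWith.convex_combination {g h : E → E} {Kg Kh : ℝ≥0} (hg : LipschitzWith Kg g)
    (hh : LipschitzWith Kh h) {ε : ℝ} (hε : ε ∈ Icc (0 : ℝ) 1) :
    LipschitzWith (Kg + Kh) fun z => (1 - ε) • g z + ε • h z := by
  have h1 : ‖1 - ε‖₊ ≤ 1 := by
    rw [← NNReal.coe_le_coe, coe_nnnorm, Real.norm_of_nonneg (by linarith [hε.2])]
    simp [hε.1]
  have h2 : ‖ε‖₊ ≤ 1 := by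
    rw [← NNReal.coe_le_coe, coe_nnnorm, Real.norm_of_nonneg hε.1]
    simpa using hε.2
  refine (((lipschitzWith_smul (1 - ε)).comp hg).add ((lipschitzWith_smul ε).comp hh)).weaken ?_
  calc ‖1 - ε‖₊ * Kg + ‖ε‖₊ * Kh ≤ 1 * Kg + 1 * Kh := by gcongr
    _ = Kg + Kh := by simp

theorem norm_sub_le_of_hasDerivAt_convex_combination {g h : E → E} {Kg Kh : ℝ≥0}
    (hg : LipschitzWith Kg g) (hh : LipschitzWith Kh h) {x y : ℝ → E} {T ε M : ℝ}
    (hε : ε ∈ Icc (0 : ℝ) 1) (hx : ∀ t ∈ Icc 0 T, HasDerivAt x (g (x t)) t)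
    (hy : ∀ t ∈ Icc 0 T, HasDerivAt y ((1 - ε) • g (y t) + ε • h (y t)) t) (h0 : y 0 = x 0)
    (hM : ∀ t ∈ Icc 0 T, ‖h (x t) - g (x t)‖ ≤ M) :
    ∀ t ∈ Icc 0 T, ‖y t - x t‖ ≤ ε * gronwallBound 0 (Kg + Kh) M t := by
  intro t ht
  -- `x` solves the perturbed equation up to an error `ε * M`.
  have hxε : ∀ s ∈ Ico 0 T, dist (g (x s)) ((1 - ε) • g (x s) + ε • h (x s)) ≤ ε * M := by
    intro s hs
    rw [dist_eq_norm, show g (x s) - ((1 - ε) • g (x s) + ε • h (x s))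
      = -(ε • (h (x s) - g (x s))) by module, norm_neg, norm_smul, Real.norm_of_nonneg hε.1]
    exact mul_le_mul_of_nonneg_left (hM s (Ico_subset_Icc_self hs)) hε.1
  have := dist_le_of_approx_trajectories_ODE (v := fun _ z => (1 - ε) • g z + ε • h z)
    (fun _ => hg.convex_combination hh hε)
    (fun s hs => (hy s hs).continuousAt.continuousWithinAt)
    (fun s hs => (hy s (Ico_subset_Icc_self hs)).hasDerivWithinAt)
    (fun s _ => (dist_self _).le)
    (fun s hs => (hx s hs).continuousAt.continuousWithinAt)
    (fun s hs => (hx s (Ico_subset_Icc_self hs)).hasDerivWithinAt) hxε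
    (by rw [h0, dist_self]) t ht
  rwa [zero_add, sub_zero, gronwallBound_zero_mul, dist_eq_norm] at this

theorem isBigO_sub_of_hasDerivAt_convex_combination {g h : E → E} {Kg Kh : ℝ≥0}
    (hg : LipschitzWith Kg g) (hh : LipschitzWith Kh h) {x : ℝ → E} {X : ℝ → ℝ → E} {T : ℝ}
    (hx : ∀ t ∈ Icc 0 T, HasDerivAt x (g (x t)) t)
    (hX : ∀ ε ∈ Ioc (0 : ℝ) 1, ∀ t ∈ Icc 0 T,
      HasDerivAt (X ε) ((1 - ε) • g (X ε t) + ε • h (X ε t)) t)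
    (hX0 : ∀ ε ∈ Ioc (0 : ℝ) 1, X ε 0 = x 0) :
    (fun p : ℝ × ℝ => X p.1 p.2 - x p.2) =O[𝓝[>] 0 ×ˢ 𝓟 (Icc 0 T)] Prod.fst := by
  obtain ⟨M, hM⟩ := isCompact_Icc.exists_bound_of_continuousOn (s := Icc 0 T)
    (f := fun t => h (x t) - g (x t)) fun t ht =>
      ((hh.continuous.continuousAt.comp (hx t ht).continuousAt).sub
        (hg.continuous.continuousAt.comp (hx t ht).continuousAt)).continuousWithinAt
  have hM' : ∀ t ∈ Icc 0 T, ‖h (x t) - g (x t)‖ ≤ max M 0 :=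
    fun t ht => (hM t ht).trans (le_max_left _ _)
  refine IsBigO.of_bound (gronwallBound 0 (Kg + Kh) (max M 0) T) ?_
  have hε : ∀ᶠ p : ℝ × ℝ in 𝓝[>] 0 ×ˢ 𝓟 (Icc 0 T), p.1 ∈ Ioc 0 1 ∧ p.2 ∈ Icc 0 T :=
    eventually_prod_principal_iff.2 <|
      Eventually.mono (Ioc_mem_nhdsGT one_pos) fun ε hε t ht => ⟨hε, ht⟩
  filter_upwards [hε] with ⟨ε, t⟩ ⟨hε, ht⟩
  calc ‖X ε t - x t‖ ≤ ε * gronwallBound 0 (Kg + Kh) (max M 0) t :=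
        norm_sub_le_of_hasDerivAt_convex_combination hg hh (Ioc_subset_Icc_self hε) hx
          (hX ε hε) (hX0 ε hε) hM' t ht
    _ ≤ gronwallBound 0 (Kg + Kh) (max M 0) T * ‖ε‖ := by
        rw [mul_comm, Real.norm_of_nonneg hε.1.le]
        gcongr
        · exact hε.1.le
        exact gronwallBound_mono le_rfl (le_max_right _ _) (by positivity) ht.2

end

section

variable {E : Type*} [NormedAddCommGroup E] [InnerProductSpace ℝ E] [CompleteSpace E]

theorem hasDerivAt_inner_sub_of_adjoint {g h : E → E} {r : E → ℝ} {x y lam : ℝ → E} {ε t : ℝ}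
    (hx : HasDerivAt x (g (x t)) t) (hy : HasDerivAt y ((1 - ε) • g (y t) + ε • h (y t)) t)
    (hlam : HasDerivAt lam
      (-(ContinuousLinearMap.adjoint (fderiv ℝ g (x t)) (lam t)) - gradient r (x t)) t) :
    HasDerivAt (fun s => ⟪y s - x s, lam s⟫)
      (⟪convexRemainder g h ε (x t) (y t), lam t⟫ + ε * ⟪h (x t) - g (x t), lam t⟫
        - fderiv ℝ r (x t) (y t - x t)) t := by
  refine ((hy.sub hx).inner ℝ hlam).congr_deriv ?_
  rw [inner_sub_right, inner_neg_right, ContinuousLinearMap.adjoint_inner_right,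
    real_inner_comm (gradient r (x t)), inner_gradient_left, convexRemainder]
  simp only [Pi.sub_apply, inner_sub_left, inner_add_left, real_inner_smul_left]
  ring

theorem integral_convexRemainder_eq {g h : E → E} {rg rh : E → ℝ} (hg : ContDiff ℝ 1 g)
    (hh : Continuous h) (hrg : ContDiff ℝ 1 rg) (hrh : Continuous rh) {x y lam : ℝ → E}
    {T ε : ℝ} (hT : 0 ≤ T) (hx : ∀ t ∈ Icc 0 T, HasDerivAt x (g (x t)) t)
    (hy : ∀ t ∈ Icc 0 T, HasDerivAt y ((1 - ε) • g (y t) + ε • h (y t)) t) (h0 : y 0 = x 0)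
    (hlam : ∀ t ∈ Icc 0 T, HasDerivAt lam
      (-(ContinuousLinearMap.adjoint (fderiv ℝ g (x t)) (lam t)) - gradient rg (x t)) t) :
    ∫ t in 0..T, (convexRemainder rg rh ε (x t) (y t) + ⟪convexRemainder g h ε (x t) (y t), lam t⟫)
      = (∫ t in 0..T, ((1 - ε) * rg (y t) + ε * rh (y t))) - (∫ t in 0..T, rg (x t))
        - ε * (∫ t in 0..T, (⟪h (x t) - g (x t), lam t⟫ + (rh (x t) - rg (x t))))
        + ⟪y T - x T, lam T⟫ := by
  rw [← uIcc_of_le hT] at hx hy hlam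
  have hxc : ContinuousOn x (uIcc 0 T) := fun t ht => (hx t ht).continuousAt.continuousWithinAt
  have hyc : ContinuousOn y (uIcc 0 T) := fun t ht => (hy t ht).continuousAt.continuousWithinAt
  have hlamc : ContinuousOn lam (uIcc 0 T) :=
    fun t ht => (hlam t ht).continuousAt.continuousWithinAt
  have hDrg := (hrg.continuous_fderiv one_ne_zero).comp_continuousOn hxc
  have hgc := hg.continuous
  have hrgc := hrg.continuous
  have hcomb : IntervalIntegrable (fun t => (1 - ε) * rg (y t) + ε * rh (y t)) volume 0 T :=
    ContinuousOn.intervalIntegrable (by fun_prop)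
  have hrgx : IntervalIntegrable (fun t => rg (x t)) volume 0 T :=
    ContinuousOn.intervalIntegrable (by fun_prop)
  have hI : IntervalIntegrable
      (fun t => ⟪h (x t) - g (x t), lam t⟫ + (rh (x t) - rg (x t))) volume 0 T :=
    ContinuousOn.intervalIntegrable (by fun_prop)
  have hcg := ContinuousOn.convexRemainder hg hh hxc hyc ε
  have hderiv : IntervalIntegrable (fun t => ⟪convexRemainder g h ε (x t) (y t), lam t⟫
      + ε * ⟪h (x t) - g (x t), lam t⟫ - fderiv ℝ rg (x t) (y t - x t)) volume 0 T :=
    ContinuousOn.intervalIntegrable (by fun_prop)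
  have hFTC := intervalIntegral.integral_eq_sub_of_hasDerivAt
    (fun t ht => hasDerivAt_inner_sub_of_adjoint (hx t ht) (hy t ht) (hlam t ht)) hderiv
  rw [h0, sub_self, inner_zero_left, sub_zero] at hFTC
  rw [← hFTC, ← intervalIntegral.integral_const_mul, ← intervalIntegral.integral_sub hcomb hrgx,
    ← intervalIntegral.integral_sub (hcomb.sub hrgx) (hI.const_mul ε),
    ← intervalIntegral.integral_add ((hcomb.sub hrgx).sub (hI.const_mul ε)) hderiv]
  congr 1 with t
  simp only [convexRemainder, smul_eq_mul]
  ring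

end

theorem stmt_8_general (n : ℕ) (T : ℝ) (hT : 0 < T)
    (x₀ : EuclideanSpace ℝ (Fin n))
    (g h : EuclideanSpace ℝ (Fin n) → EuclideanSpace ℝ (Fin n))
    (hg : ContDiff ℝ 2 g)
    (Kg Kh : NNReal) (hgLip : LipschitzWith Kg g) (hhLip : LipschitzWith Kh h)
    (rg rh : EuclideanSpace ℝ (Fin n) → ℝ) (q : EuclideanSpace ℝ (Fin n) → ℝ)
    (hrg : ContDiff ℝ 1 rg) (hrh : ContDiff ℝ 1 rh) (hq : ContDiff ℝ 1 q)
    (xbar : ℝ → EuclideanSpace ℝ (Fin n))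
    (hx0 : xbar 0 = x₀)
    (hxbar : ∀ t ∈ Set.Icc (0 : ℝ) T, HasDerivAt xbar (g (xbar t)) t)
    (lam : ℝ → EuclideanSpace ℝ (Fin n))
    (hlamT : lam T = gradient q (xbar T))
    (hlam : ∀ t ∈ Set.Icc (0 : ℝ) T, HasDerivAt lam
      (-(ContinuousLinearMap.adjoint (fderiv ℝ g (xbar t)) (lam t))
        - gradient rg (xbar t)) t)
    (X : ℝ → ℝ → EuclideanSpace ℝ (Fin n))
    (hX0 : ∀ ε ∈ Set.Ioc (0 : ℝ) 1, X ε 0 = x₀)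
    (hXode : ∀ ε ∈ Set.Ioc (0 : ℝ) 1, ∀ t ∈ Set.Icc (0 : ℝ) T,
      HasDerivAt (X ε) ((1 - ε) • g (X ε t) + ε • h (X ε t)) t)
    (Jeps : ℝ → ℝ)
    (hJeps : ∀ ε ∈ Set.Ioc (0 : ℝ) 1,
      Jeps ε = (∫ t in (0 : ℝ)..T, ((1 - ε) * rg (X ε t) + ε * rh (X ε t)))
        + q (X ε T))
    (J0 : ℝ)
    (hJ0 : J0 = (∫ t in (0 : ℝ)..T, rg (xbar t)) + q (xbar T)) :
    Filter.Tendsto (fun ε : ℝ => (Jeps ε - J0) / ε)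
      (nhdsWithin 0 (Set.Ioi 0))
      (nhds (∫ t in (0 : ℝ)..T,
        (⟪h (xbar t) - g (xbar t), lam t⟫ + (rh (xbar t) - rg (xbar t))))) := by
  have hg₁ : ContDiff ℝ 1 g := hg.of_le one_le_two
  have hK : IsCompact (xbar '' Icc 0 T) := isCompact_Icc.image_of_continuousOn
    fun t ht => (hxbar t ht).continuousAt.continuousWithinAt
  have hδ := isBigO_sub_of_hasDerivAt_convex_combination hgLip hhLip hxbar hXode
    fun ε hε => (hX0 ε hε).trans hx0.symm
  obtain ⟨L, hL⟩ := isCompact_Icc.exists_bound_of_continuousOn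
    fun t ht => (hlam t ht).continuousAt.continuousWithinAt
  have hlamO : (fun p : ℝ × ℝ => lam p.2) =O[𝓝[>] 0 ×ˢ 𝓟 (Icc 0 T)] fun _ => (1 : ℝ) :=
    IsBigO.of_bound L <| eventually_prod_principal_iff.2 <|
      Eventually.of_forall fun _ t ht => by simpa using hL t ht
  have hintegral := isLittleO_intervalIntegral_of_isLittleO_prod (f := id) (Φ := fun ε t =>
      convexRemainder rg rh ε (xbar t) (X ε t) + ⟪convexRemainder g h ε (xbar t) (X ε t), lam t⟫)
    hT.le
    ((isLittleO_convexRemainder_comp hrg hrh.continuous hK (mapsTo_image _ _)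
      nhdsWithin_le_nhds hδ).add
    ((isLittleO_convexRemainder_comp hg₁ hhLip.continuous hK (mapsTo_image _ _)
      nhdsWithin_le_nhds hδ).inner_isBigO_one hlamO))
  have hδT : (fun ε => X ε T - xbar T) =O[𝓝[>] 0] id :=
    hδ.comp_tendsto (tendsto_id.prodMk (tendsto_principal.2 (Eventually.of_forall
      fun _ => right_mem_Icc.2 hT.le)))
  have hterminal := (hq.differentiable one_ne_zero (xbar T)).hasFDerivAt.isLittleO_comp_of_isBigO
    hδT (tendsto_nhdsWithin_of_tendsto_nhds tendsto_id)
  refine tendsto_div_of_isLittleO_sub_mul (eventually_mem_nhdsWithin.mono fun _ hε => hε.ne')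
    ((hintegral.add hterminal).congr' ?_ EventuallyEq.rfl)
  filter_upwards [Ioc_mem_nhdsGT one_pos] with ε hε
  rw [integral_convexRemainder_eq hg₁ hhLip.continuous hrg hrh.continuous hT.le
    hxbar (hXode ε hε) ((hX0 ε hε).trans hx0.symm) hlam, hJeps ε hε, hJ0, hlamT,
    real_inner_comm, inner_gradient_left]
  ring

/-- Adjoint-based formula for the nonstandard derivative: with nominal
trajectory `x̄` of `x' = g(x)`, adjoint state `lam` solving the adjoint system, and
`x_ε` solving the `ε`-variational system `x' = (1−ε)g(x) + εh(x)`, the one-sided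
difference quotient of the convex-combination payoff tends to
`∫₀ᵀ (⟪h(x̄) − g(x̄), lam⟫ + r_h(x̄) − r_g(x̄)) dt` as `ε → 0⁺`. -/
theorem stmt_8 (n : ℕ) (hn : 1 ≤ n) (T : ℝ) (hT : 0 < T)
    (x₀ : EuclideanSpace ℝ (Fin n))
    (g h : EuclideanSpace ℝ (Fin n) → EuclideanSpace ℝ (Fin n))
    (hg : ContDiff ℝ 2 g) (hh : ContDiff ℝ 2 h)
    (Kg Kh : NNReal) (hgLip : LipschitzWith Kg g) (hhLip : LipschitzWith Kh h)
    (rg rh : EuclideanSpace ℝ (Fin n) → ℝ) (q : EuclideanSpace ℝ (Fin n) → ℝ)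
    (hrg : ContDiff ℝ 1 rg) (hrh : ContDiff ℝ 1 rh) (hq : ContDiff ℝ 1 q)
    (xbar : ℝ → EuclideanSpace ℝ (Fin n))
    (hx0 : xbar 0 = x₀)
    (hxbar : ∀ t ∈ Set.Icc (0 : ℝ) T, HasDerivAt xbar (g (xbar t)) t)
    (lam : ℝ → EuclideanSpace ℝ (Fin n))
    (hlamT : lam T = gradient q (xbar T))
    (hlam : ∀ t ∈ Set.Icc (0 : ℝ) T, HasDerivAt lam
      (-(ContinuousLinearMap.adjoint (fderiv ℝ g (xbar t)) (lam t))
        - gradient rg (xbar t)) t)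
    (X : ℝ → ℝ → EuclideanSpace ℝ (Fin n))
    (hX0 : ∀ ε ∈ Set.Ioc (0 : ℝ) 1, X ε 0 = x₀)
    (hXode : ∀ ε ∈ Set.Ioc (0 : ℝ) 1, ∀ t ∈ Set.Icc (0 : ℝ) T,
      HasDerivAt (X ε) ((1 - ε) • g (X ε t) + ε • h (X ε t)) t)
    (Jeps : ℝ → ℝ)
    (hJeps : ∀ ε ∈ Set.Ioc (0 : ℝ) 1,
      Jeps ε = (∫ t in (0 : ℝ)..T, ((1 - ε) * rg (X ε t) + ε * rh (X ε t)))
        + q (X ε T))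
    (J0 : ℝ)
    (hJ0 : J0 = (∫ t in (0 : ℝ)..T, rg (xbar t)) + q (xbar T)) :
    Filter.Tendsto (fun ε : ℝ => (Jeps ε - J0) / ε)
      (nhdsWithin 0 (Set.Ioi 0))
      (nhds (∫ t in (0 : ℝ)..T,
        (⟪h (xbar t) - g (xbar t), lam t⟫ + (rh (xbar t) - rg (xbar t))))) :=
  stmt_8_general n T hT x₀ g h hg Kg Kh hgLip hhLip rg rh q hrg hrh hq xbar hx0 hxbar lam hlamT hlam
    X hX0 hXode Jeps hJeps J0 hJ0
end

section
/- Fix n ≥ 1, m ≥ 1, T > 0, x₀ ∈ ℝⁿ, an n×n real matrix A and an n×m real matrix B. Let r₁ : ℝⁿ → ℝ be concave and continuous, r₂ : ℝ^m → ℝ concave, and q : ℝⁿ → ℝ concave and continuous. Suppose that for every α in the box [0,1]^m there is a function x_α : ℝ → ℝⁿ with x_α(0) = x₀ and x_α'(t) = A x_α(t) + B α for all t ∈ [0,T]. Then the payoff function J(α) := ∫₀ᵀ ( r₁(x_α(t)) + r₂(α) ) dt + q(x_α(T)) is concave on [0,1]^m. -/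
open Set MeasureTheory

/-
The state `x_α(t)` depends affinely on the control `α`: if `x_α` and `x_β` solve
`x' = A x + B α` and `x' = A x + B β` from the same initial point, then `a x_α + b x_β`
(with `a + b = 1`) solves `x' = A x + B (a α + b β)` from that point, so by uniqueness of
solutions of this Lipschitz ODE it is `x_{aα + bβ}`. Composing the concave functions `r₁`, `r₂`
and `q` with affine maps keeps them concave, and integrating over `t` preserves concavity.
-/

section AffineODE

variable {E U : Type*} [NormedAddCommGroup E] [NormedSpace ℝ E] [AddCommGroup U] [Module ℝ U]

theorem eqOn_Icc_of_hasDerivAt_affine (L : E →L[ℝ] E) (c : E) {f g : ℝ → E} {T : ℝ}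
    (hf : ∀ t ∈ Icc 0 T, HasDerivAt f (L (f t) + c) t)
    (hg : ∀ t ∈ Icc 0 T, HasDerivAt g (L (g t) + c) t) (h0 : f 0 = g 0) :
    EqOn f g (Icc 0 T) :=
  ODE_solution_unique (v := fun _ x => L x + c) (fun _ => L.lipschitz.add (LipschitzWith.const c))
    (fun t ht => (hf t ht).continuousAt.continuousWithinAt)
    (fun t ht => (hf t (Ico_subset_Icc_self ht)).hasDerivWithinAt)
    (fun t ht => (hg t ht).continuousAt.continuousWithinAt)
    (fun t ht => (hg t (Ico_subset_Icc_self ht)).hasDerivWithinAt) h0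

theorem affineODE_solution_smul_add_smul (L : E →L[ℝ] E) (B : U →ₗ[ℝ] E) {s : Set U} {T : ℝ}
    {x₀ : E} {X : U → ℝ → E} (hX0 : ∀ α ∈ s, X α 0 = x₀)
    (hXode : ∀ α ∈ s, ∀ t ∈ Icc 0 T, HasDerivAt (X α) (L (X α t) + B α) t)
    {α β : U} {a b : ℝ} (hα : α ∈ s) (hβ : β ∈ s) (hαβ : a • α + b • β ∈ s) (hab : a + b = 1) :
    EqOn (X (a • α + b • β)) (fun t => a • X α t + b • X β t) (Icc 0 T) := by
  refine eqOn_Icc_of_hasDerivAt_affine L (B (a • α + b • β)) (hXode _ hαβ) (fun t ht => ?_) ?_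
  · refine (((hXode α hα t ht).const_smul a).add ((hXode β hβ t ht).const_smul b)).congr_deriv ?_
    simp only [map_add, map_smul, smul_add]
    abel
  · simp only [hX0 _ hαβ, hX0 α hα, hX0 β hβ, ← add_smul, hab, one_smul]

end AffineODE

section Concavity

variable {E F : Type*} [AddCommGroup E] [Module ℝ E] [AddCommGroup F] [Module ℝ F]

theorem ConcaveOn.comp_of_map_smul_add_smul {s : Set E} {t : Set F} {f : F → ℝ} {g : E → F}
    (hf : ConcaveOn ℝ t f) (hs : Convex ℝ s) (hst : MapsTo g s t)
    (hg : ∀ ⦃x⦄, x ∈ s → ∀ ⦃y⦄, y ∈ s → ∀ ⦃a b : ℝ⦄, 0 ≤ a → 0 ≤ b → a + b = 1 →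
      g (a • x + b • y) = a • g x + b • g y) :
    ConcaveOn ℝ s (fun x => f (g x)) := by
  refine ⟨hs, fun x hx y hy a b ha hb hab => ?_⟩
  dsimp only
  rw [hg hx hy ha hb hab]
  exact hf.2 (hst hx) (hst hy) ha hb hab

theorem ConcaveOn.intervalIntegral {s : Set E} {F : E → ℝ → ℝ} {a b : ℝ} (hab : a ≤ b)
    (hs : Convex ℝ s) (hF : ∀ t ∈ Icc a b, ConcaveOn ℝ s (fun x => F x t))
    (hint : ∀ x ∈ s, IntervalIntegrable (F x) volume a b) :
    ConcaveOn ℝ s (fun x => ∫ t in a..b, F x t) := by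
  refine ⟨hs, fun x hx y hy c d hc hd hcd => ?_⟩
  have hintx := (hint x hx).const_mul c
  have hinty := (hint y hy).const_mul d
  simp only [smul_eq_mul]
  rw [← intervalIntegral.integral_const_mul, ← intervalIntegral.integral_const_mul,
    ← intervalIntegral.integral_add hintx hinty]
  exact intervalIntegral.integral_mono_on hab (hintx.add hinty)
    (hint _ (hs hx hy hc hd hcd)) fun t ht => (hF t ht).2 hx hy hc hd hcd

end Concavity

theorem stmt_16_general (n m : ℕ) (T : ℝ) (hT : 0 < T)
    (x₀ : Fin n → ℝ)
    (A : Matrix (Fin n) (Fin n) ℝ) (B : Matrix (Fin n) (Fin m) ℝ)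
    (r₁ : (Fin n → ℝ) → ℝ) (r₂ : (Fin m → ℝ) → ℝ) (q : (Fin n → ℝ) → ℝ)
    (hr₁ : ConcaveOn ℝ Set.univ r₁) (hr₁c : Continuous r₁)
    (hr₂ : ConcaveOn ℝ Set.univ r₂)
    (hq : ConcaveOn ℝ Set.univ q)
    (X : (Fin m → ℝ) → ℝ → (Fin n → ℝ))
    (hX0 : ∀ α : Fin m → ℝ, (∀ i, α i ∈ Set.Icc (0 : ℝ) 1) → X α 0 = x₀)
    (hXode : ∀ α : Fin m → ℝ, (∀ i, α i ∈ Set.Icc (0 : ℝ) 1) →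
      ∀ t ∈ Set.Icc (0 : ℝ) T,
        HasDerivAt (X α) (A.mulVec (X α t) + B.mulVec α) t) :
    ConcaveOn ℝ {α : Fin m → ℝ | ∀ i, α i ∈ Set.Icc (0 : ℝ) 1}
      (fun α => (∫ t in (0 : ℝ)..T, (r₁ (X α t) + r₂ α)) + q (X α T)) := by
  set box := {α : Fin m → ℝ | ∀ i, α i ∈ Set.Icc (0 : ℝ) 1}
  have hbox : Convex ℝ box := by
    simpa only [Set.pi, mem_univ, true_imp_iff] using
      convex_pi (s := univ) (t := fun _ : Fin m => Icc (0 : ℝ) 1) fun _ _ => convex_Icc 0 1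
  have hstate : ∀ φ : (Fin n → ℝ) → ℝ, ConcaveOn ℝ univ φ → ∀ t ∈ Icc 0 T,
      ConcaveOn ℝ box fun α => φ (X α t) := fun φ hφ t ht =>
    hφ.comp_of_map_smul_add_smul hbox (mapsTo_univ _ _) fun α hα β hβ a b ha hb hab =>
      affineODE_solution_smul_add_smul (Matrix.toLin' A).toContinuousLinearMap (Matrix.toLin' B)
        hX0 hXode hα hβ (hbox hα hβ ha hb hab) hab ht
  have hcont : ∀ α ∈ box, ContinuousOn (X α) (uIcc 0 T) := fun α hα t ht =>
    (hXode α hα t (by rwa [uIcc_of_le hT.le] at ht)).continuousAt.continuousWithinAt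
  have hint : ∀ α ∈ box, IntervalIntegrable (fun t => r₁ (X α t) + r₂ α) volume 0 T :=
    fun α hα => ((hr₁c.comp_continuousOn (hcont α hα)).add continuousOn_const).intervalIntegrable
  exact (ConcaveOn.intervalIntegral hT.le hbox
    (fun t ht => (hstate r₁ hr₁ t ht).add (hr₂.subset (subset_univ box) hbox)) hint).add
    (hstate q hq T ⟨hT.le, le_rfl⟩)

/-- Concavity of the payoff of a linear combinatorial dynamical
system: if `r₁`, `r₂`, `q` are concave (`r₁`, `q` also continuous) and `X α` solves
`x' = A x + B α`, `x(0) = x₀` for each `α` in the box `[0,1]^m`, then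
`J(α) = ∫₀ᵀ (r₁(X α t) + r₂ α) dt + q(X α T)` is concave on the box. -/
theorem stmt_16 (n m : ℕ) (hn : 1 ≤ n) (hm : 1 ≤ m) (T : ℝ) (hT : 0 < T)
    (x₀ : Fin n → ℝ)
    (A : Matrix (Fin n) (Fin n) ℝ) (B : Matrix (Fin n) (Fin m) ℝ)
    (r₁ : (Fin n → ℝ) → ℝ) (r₂ : (Fin m → ℝ) → ℝ) (q : (Fin n → ℝ) → ℝ)
    (hr₁ : ConcaveOn ℝ Set.univ r₁) (hr₁c : Continuous r₁)
    (hr₂ : ConcaveOn ℝ Set.univ r₂)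
    (hq : ConcaveOn ℝ Set.univ q) (hqc : Continuous q)
    (X : (Fin m → ℝ) → ℝ → (Fin n → ℝ))
    (hX0 : ∀ α : Fin m → ℝ, (∀ i, α i ∈ Set.Icc (0 : ℝ) 1) → X α 0 = x₀)
    (hXode : ∀ α : Fin m → ℝ, (∀ i, α i ∈ Set.Icc (0 : ℝ) 1) →
      ∀ t ∈ Set.Icc (0 : ℝ) T,
        HasDerivAt (X α) (A.mulVec (X α t) + B.mulVec α) t) :
    ConcaveOn ℝ {α : Fin m → ℝ | ∀ i, α i ∈ Set.Icc (0 : ℝ) 1}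
      (fun α => (∫ t in (0 : ℝ)..T, (r₁ (X α t) + r₂ α)) + q (X α T)) :=
  stmt_16_general n m T hT x₀ A B r₁ r₂ q hr₁ hr₁c hr₂ hq X hX0 hXode
end
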